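/- For every vertex x ∈ V, the identity Σ_{y∼x} c_{xy} v_{xy} = δ_x holds in the energy Hilbert space, where v_{xy} are dipole vectors and the sum is over the (finitely many) neighbors of x. -/

import Mathlib

open scoped InnerProductSpace ComplexConjugate

/-- A connected electrical network: a countable locally finite connected graph
with a symmetric conductance function `c` that is positive on edges. -/
structure Network (V : Type*) where
  adj : V → V → Prop
  symm : ∀ x y, adj x y → adj y x
  loopless : ∀ x, ¬ adj x x
  locFin : ∀ x, {y | adj x y}.Finite
  degPos : ∀ x, ∃ y, adj x y
  conn : ∀ x y, Relation.ReflTransGen (fun a b => adj a b) x y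
  c : V → V → ℝ
  c_symm : ∀ x y, c x y = c y x
  c_pos : ∀ x y, adj x y → 0 < c x y

namespace Network

variable {V : Type*} (N : Network V)

attribute [local instance] Classical.propDecidable

/-- The (finite) set of neighbors of a vertex. -/
noncomputable def nbrs (x : V) : Finset V := (N.locFin x).toFinset

/-- The energy inner product `⟨u,v⟩ = (1/2) ΣΣ c_{xy} (ū(x)-ū(y))(v(x)-v(y))`. -/
noncomputable def energyInner (u v : V → ℂ) : ℂ :=
  (1 / 2) * ∑' p : V × V,
    if N.adj p.1 p.2 then (N.c p.1 p.2 : ℂ) * (conj (u p.1 - u p.2)) * (v p.1 - v p.2) else 0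

/-- The energy `‖u‖²_{H_E} = (1/2) ΣΣ c_{xy} |u(x)-u(y)|²`. -/
noncomputable def energy (u : V → ℂ) : ℝ :=
  (1 / 2) * ∑' p : V × V,
    if N.adj p.1 p.2 then N.c p.1 p.2 * ‖u p.1 - u p.2‖ ^ 2 else 0

/-- `u` has finite energy (the energy sum converges). -/
def energySummable (u : V → ℂ) : Prop :=
  Summable (fun p : V × V => if N.adj p.1 p.2 then N.c p.1 p.2 * ‖u p.1 - u p.2‖ ^ 2 else 0)

/-- The graph Laplacian `(Δu)(x) = Σ_{y∼x} c_{xy} (u(x) - u(y))`. -/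
noncomputable def lap (u : V → ℂ) (x : V) : ℂ :=
  ∑ y ∈ N.nbrs x, (N.c x y : ℂ) * (u x - u y)

/-- The total conductance `c(x) = Σ_{y∼x} c_{xy}` at a vertex. -/
noncomputable def cbar (x : V) : ℝ := ∑ y ∈ N.nbrs x, N.c x y

/-- The transition operator `(Pu)(x) = Σ_{y∼x} (c_{xy}/c(x)) u(y)`. -/
noncomputable def trans (u : V → ℂ) (x : V) : ℂ :=
  ∑ y ∈ N.nbrs x, ((N.c x y / N.cbar x : ℝ) : ℂ) * u y

/-- The weighted `ℓ²(V, c̃)` inner product `Σ_x c̃(x) ū₁(x) u₂(x)`. -/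
noncomputable def wInner (u₁ u₂ : V → ℂ) : ℂ :=
  ∑' x : V, (N.cbar x : ℂ) * (conj (u₁ x)) * u₂ x

end Network

/-- A realization of the energy Hilbert space `H_E` of a network: a complete complex
inner product space `H` whose elements represent functions on `V` (modulo constants,
via `rep`), whose inner product is the energy form, and which contains (a class of)
every finite-energy function on `V`. -/
structure EnergySpace {V : Type*} (N : Network V) (H : Type*)
    [NormedAddCommGroup H] [InnerProductSpace ℂ H] [CompleteSpace H] where
  rep : H → V → ℂ
  inner_eq : ∀ f g : H, ⟪f, g⟫_ℂ = N.energyInner (rep f) (rep g)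
  surj : ∀ u : V → ℂ, N.energySummable u →
    ∃ f : H, ∀ a b : V, rep f a - rep f b = u a - u b

attribute [local instance] Classical.propDecidable

/-! Pair both sides with an arbitrary `u ∈ H_E`. The dipoles turn the left side into
`Σ_{y∼x} c_{xy} (u(x) - u(y)) = (Δu)(x)`. In the energy sum for `⟨δ_x, u⟩` only the ordered
edges `(x, y)` and `(y, x)` with `y ∼ x` survive; each contributes `c_{xy} (u(x) - u(y))`, so the
two copies of `(Δu)(x)` cancel the factor `1/2`. -/

namespace Network

variable {V : Type*} (N : Network V)

theorem mem_nbrs {x y : V} : y ∈ N.nbrs x ↔ N.adj x y :=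
  (N.locFin x).mem_toFinset

theorem energyInner_congr_left {u u' : V → ℂ} (h : ∀ a b, u a - u b = u' a - u' b)
    (g : V → ℂ) : N.energyInner u g = N.energyInner u' g := by
  simp only [energyInner, h]

theorem hasSum_ite_fst_eq_adj (x : V) (h : V → ℂ) :
    HasSum (fun p : V × V => if p.1 = x ∧ N.adj p.1 p.2 then h p.2 else 0)
      (∑ y ∈ N.nbrs x, h y) := by
  have hsupp : ∀ p ∉ Set.range (Prod.mk x),
      (if p.1 = x ∧ N.adj p.1 p.2 then h p.2 else 0) = 0 := by
    rintro ⟨a, b⟩ hp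
    rw [if_neg]
    rintro ⟨rfl, -⟩
    exact hp ⟨b, rfl⟩
  rw [← (Prod.mk_right_injective x).hasSum_iff hsupp]
  simp only [Function.comp_def, true_and]
  rw [← Finset.sum_congr rfl fun y hy => if_pos (N.mem_nbrs.mp hy)]
  exact hasSum_sum_of_ne_finset_zero fun y hy => if_neg (mt N.mem_nbrs.mpr hy)

theorem energyInner_indicator_left (x : V) (g : V → ℂ) :
    N.energyInner (fun a => if a = x then 1 else 0) g = N.lap g x := by
  set f : V × V → ℂ := fun p =>
    if p.1 = x ∧ N.adj p.1 p.2 then N.c x p.2 * (g x - g p.2) else 0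
  have hf : HasSum f (N.lap g x) := N.hasSum_ite_fst_eq_adj x _
  have hsplit : (fun p : V × V => if N.adj p.1 p.2 then (N.c p.1 p.2 : ℂ) *
      conj ((if p.1 = x then 1 else 0) - (if p.2 = x then 1 else 0)) * (g p.1 - g p.2) else 0)
      = fun p => f p + f p.swap := by
    ext ⟨a, b⟩
    by_cases hab : N.adj a b
    · have hba := N.symm a b hab
      by_cases ha : a = x
      · subst ha
        have hb : b ≠ a := fun h => N.loopless a (h ▸ hab)
        simp [f, hab, hb]
      · by_cases hb : b = x
        · subst hb
          simp [f, ha, hab, hba, N.c_symm a b]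
          ring
        · simp [f, ha, hb, hab]
    · have hba : ¬N.adj b a := fun h => hab (N.symm b a h)
      simp [f, hab, hba]
  have hswap : HasSum (fun p : V × V => f p.swap) (N.lap g x) :=
    (Equiv.prodComm V V).hasSum_iff.mpr hf
  rw [energyInner, hsplit, (hf.add hswap).tsum_eq]
  ring

end Network

theorem sum_conductance_dipoles_eq_delta_general
    {V : Type*} (N : Network V)
    {H : Type*} [NormedAddCommGroup H] [InnerProductSpace ℂ H] [CompleteSpace H]
    (S : EnergySpace N H) (x : V)
    (v : V → H)
    (hv : ∀ y : V, ∀ u : H, ⟪v y, u⟫_ℂ = S.rep u x - S.rep u y)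
    (dx : H)
    (hdx : ∀ a b : V, S.rep dx a - S.rep dx b =
      (if a = x then (1 : ℂ) else 0) - (if b = x then (1 : ℂ) else 0)) :
    ∑ y ∈ N.nbrs x, (N.c x y : ℂ) • v y = dx := by
  refine ext_inner_right ℂ fun u => ?_
  rw [sum_inner, S.inner_eq, N.energyInner_congr_left hdx, N.energyInner_indicator_left]
  simp only [inner_smul_left, hv, Complex.conj_ofReal, Network.lap]

/-- For every vertex `x`, `Σ_{y∼x} c_{xy} v_{xy} = δ_x` in the
energy Hilbert space. -/
theorem sum_conductance_dipoles_eq_delta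
    {V : Type*} [Countable V] (N : Network V)
    {H : Type*} [NormedAddCommGroup H] [InnerProductSpace ℂ H] [CompleteSpace H]
    (S : EnergySpace N H) (x : V)
    (v : V → H)
    (hv : ∀ y : V, ∀ u : H, ⟪v y, u⟫_ℂ = S.rep u x - S.rep u y)
    (dx : H)
    (hdx : ∀ a b : V, S.rep dx a - S.rep dx b =
      (if a = x then (1 : ℂ) else 0) - (if b = x then (1 : ℂ) else 0)) :
    ∑ y ∈ N.nbrs x, (N.c x y : ℂ) • v y = dx :=
  sum_conductance_dipoles_eq_delta_general N S x v hv dx hdx
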